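/- Let d ≥ 3 and fix t ∈ (−1,1). Suppose there exists a unit vector w ∈ ℂ^{d−1} such that, taking V_m = 2|w⟩⟨w| − I_{d−1} for all m and A_m = S^{−(m−1)}(t ⊕ V_m)S^{m−1} (so each A_m is self-adjoint), the family {A_m A_n}_{m,n=1}^d is linearly independent. Then for almost every unit vector x ∈ ℂ^{d−1} — i.e., for all x outside a null set of the canonical surface measure on the unit sphere of ℂ^{d−1} ≅ ℝ^{2(d−1)} — taking V_m = 2|x⟩⟨x| − I_{d−1} for all m, the resulting family {A_m A_n}_{m,n=1}^d is linearly independent. -/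

import Mathlib

open MeasureTheory Matrix

noncomputable section

/-- The cyclic shift matrix `S = ∑_k |e_k⟩⟨e_{k+1}|` (indices mod `d`). -/
def cyclicShift (d : ℕ) : Matrix (Fin d) (Fin d) ℂ :=
  Matrix.of fun j k => if (k : ℕ) = ((j : ℕ) + 1) % d then 1 else 0

/-- The block-diagonal matrix `t ⊕ V ∈ M_d(ℂ)` with `(1,1)` entry `t` and lower-right
`(d−1)×(d−1)` block `V`. -/
def blockTV (d : ℕ) (t : ℂ) (V : Matrix (Fin (d - 1)) (Fin (d - 1)) ℂ) :
    Matrix (Fin d) (Fin d) ℂ :=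
  Matrix.of fun j k =>
    if h : (j : ℕ) = 0 ∨ (k : ℕ) = 0 then
      (if (j : ℕ) = 0 ∧ (k : ℕ) = 0 then t else 0)
    else V ⟨(j : ℕ) - 1, by have := j.isLt; omega⟩ ⟨(k : ℕ) - 1, by have := k.isLt; omega⟩

/-- `A_m = S^{−(m−1)} (t ⊕ V_m) S^{m−1}` (with `m : Fin d` corresponding to
`m+1 ∈ {1,…,d}`). -/
def keyA (d : ℕ) (t : ℂ) (V : Fin d → Matrix (Fin (d - 1)) (Fin (d - 1)) ℂ) (m : Fin d) :
    Matrix (Fin d) (Fin d) ℂ :=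
  ((cyclicShift d) ^ (m : ℕ))ᴴ * blockTV d t (V m) * (cyclicShift d) ^ (m : ℕ)

/-- The matrix `2|x⟩⟨x| − I_n` built from a vector `x ∈ ℂⁿ`; when `x` is a unit vector
this is unitary and self-adjoint. -/
def reflMat (n : ℕ) (x : EuclideanSpace ℂ (Fin n)) : Matrix (Fin n) (Fin n) ℂ :=
  Matrix.of fun j k => 2 * x j * (starRingEnd ℂ) (x k) - (if j = k then 1 else 0)

instance euclideanComplexMeasurableSpace (n : ℕ) :
    MeasurableSpace (EuclideanSpace ℂ (Fin n)) := borel _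

instance euclideanComplexBorelSpace (n : ℕ) :
    BorelSpace (EuclideanSpace ℂ (Fin n)) := ⟨rfl⟩

/-!
Replace `t` and `reflMat x` by their quadratic homogenizations `t ⟪y, y⟫` and
`2|y⟩⟨y| − ⟪y, y⟫ I`. The determinant of the coordinates of `{A_m A_n}` then becomes a function
`G` of `y ∈ ℂ^{d−1}` which is a polynomial in the `2(d−1)` real coordinates of `y`, is
homogeneous, and on the unit sphere vanishes exactly where linear independence fails. The
hypothesis at `w` says `G ≠ 0`, so the zero set of `G` is Lebesgue-null (Fubini and induction on
the number of variables). Being a cone, it contains `(0, 1) • s` for the bad set `s` on the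
sphere, and `μ.toSphere s` is a multiple of `μ ((0, 1) • s)`.
-/

open MvPolynomial in
theorem MvPolynomial.volume_setOf_eval_ofReal_eq_zero {n : ℕ} {p : MvPolynomial (Fin n) ℂ}
    (hp : p ≠ 0) : volume {v : Fin n → ℝ | eval (fun i => (v i : ℂ)) p = 0} = 0 := by
  induction n with
  | zero =>
    obtain ⟨c, rfl⟩ := C_surjective (Fin 0) p
    simp_all
  | succ n ih =>
    obtain ⟨k, hk⟩ : ∃ k, (finSuccEquiv ℂ n p).coeff k ≠ 0 := by
      by_contra! h
      exact hp <| (finSuccEquiv ℂ n).injective <| by ext1 k; simp [h k]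
    let T : Set (ℝ × (Fin n → ℝ)) :=
      {q | eval (Fin.cons (q.1 : ℂ) fun i => (q.2 i : ℂ)) p = 0}
    have hT : MeasurableSet T :=
      measurableSet_eq_fun ((continuous_eval p).comp (by fun_prop)).measurable measurable_const
    have hpre : {v : Fin (n + 1) → ℝ | eval (fun i => (v i : ℂ)) p = 0} =
        MeasurableEquiv.piFinSuccAbove (fun _ => ℝ) 0 ⁻¹' T := by
      ext v
      refine Iff.of_eq (congrArg (fun z => eval z p = 0) ?_)
      funext i
      cases i using Fin.cases <;> rfl
    rw [hpre, (volume_preserving_piFinSuccAbove (fun _ => ℝ) 0).measure_preimage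
      hT.nullMeasurableSet, Measure.volume_eq_prod, Measure.prod_apply_symm hT]
    -- For a.e. `y` the coefficient of `X₀ ^ k` does not vanish at `y`, so the slice over `y`
    -- consists of real roots of a nonzero polynomial in one variable.
    have hslice : ∀ᵐ y ∂(volume : Measure (Fin n → ℝ)),
        volume ((fun x => (x, y)) ⁻¹' T) = 0 := by
      have hy : ∀ᵐ y ∂(volume : Measure (Fin n → ℝ)),
          eval (fun i => (y i : ℂ)) ((finSuccEquiv ℂ n p).coeff k) ≠ 0 :=
        measure_eq_zero_iff_ae_notMem.1 (ih hk)
      filter_upwards [hy] with y hy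
      have hq : Polynomial.map (eval fun i => (y i : ℂ)) (finSuccEquiv ℂ n p) ≠ 0 :=
        fun h => hy (by simpa using congrArg (Polynomial.coeff · k) h)
      refine Set.Finite.measure_zero ?_ _
      refine ((Polynomial.finite_setOfPred_isRoot hq).preimage
        Complex.ofReal_injective.injOn).subset fun x hx => ?_
      simpa [T, eval_eq_eval_mv_eval'] using hx
    simp [lintegral_congr_ae hslice]

def complexPolynomialFunctions (n : ℕ) : Subalgebra ℂ ((Fin n → ℝ) → ℂ) :=
  (MvPolynomial.aeval fun i (v : Fin n → ℝ) => (v i : ℂ)).range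

namespace complexPolynomialFunctions

variable {n : ℕ}

open MvPolynomial in
theorem aeval_apply (p : MvPolynomial (Fin n) ℂ) (v : Fin n → ℝ) :
    aeval (fun i (v : Fin n → ℝ) => (v i : ℂ)) p v = eval (fun i => (v i : ℂ)) p := by
  induction p using MvPolynomial.induction_on <;> simp_all

theorem continuous {f : (Fin n → ℝ) → ℂ} (hf : f ∈ complexPolynomialFunctions n) :
    Continuous f := by
  obtain ⟨p, rfl⟩ := hf
  have : Continuous fun v : Fin n → ℝ => MvPolynomial.eval (fun i => (v i : ℂ)) p :=
    (MvPolynomial.continuous_eval p).comp (by fun_prop)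
  exact funext (aeval_apply p) ▸ this

theorem volume_setOf_eq_zero {f : (Fin n → ℝ) → ℂ} (hf : f ∈ complexPolynomialFunctions n)
    (hf0 : f ≠ 0) : volume {v | f v = 0} = 0 := by
  obtain ⟨p, rfl⟩ := hf
  refine funext (aeval_apply p) ▸ MvPolynomial.volume_setOf_eval_ofReal_eq_zero ?_
  rintro rfl
  exact hf0 (map_zero _)

theorem linearMap_mem (L : (Fin n → ℝ) →ₗ[ℝ] ℂ) : ⇑L ∈ complexPolynomialFunctions n := by
  refine ⟨∑ i, MvPolynomial.C (L (Pi.single i 1)) * MvPolynomial.X i, funext fun v => ?_⟩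
  rw [AlgHom.toRingHom_eq_coe, RingHom.coe_coe, aeval_apply, L.pi_apply_eq_sum_univ v]
  simp only [map_sum, map_mul, MvPolynomial.eval_C, MvPolynomial.eval_X, Complex.real_smul]
  refine Finset.sum_congr rfl fun i _ => ?_
  rw [mul_comm]
  congr 2
  ext j
  simp [Pi.single_apply, eq_comm]

end complexPolynomialFunctions

def IsPolynomialFunction {E : Type*} [AddCommGroup E] [Module ℝ E] (f : E → ℂ) : Prop :=
  ∀ n (ψ : (Fin n → ℝ) →ₗ[ℝ] E), f ∘ ψ ∈ complexPolynomialFunctions n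

namespace IsPolynomialFunction

variable {E : Type*} [NormedAddCommGroup E] [NormedSpace ℝ E] [FiniteDimensional ℝ E]
  {f : E → ℂ}

theorem continuous (hf : IsPolynomialFunction f) : Continuous f := by
  let ψ := (Module.finBasis ℝ E).equivFunL.symm
  simpa [Function.comp_def] using
    (complexPolynomialFunctions.continuous (hf _ ψ.toLinearMap)).comp ψ.symm.continuous

theorem addHaar_setOf_eq_zero [MeasurableSpace E] [BorelSpace E] (μ : Measure E)
    [μ.IsAddHaarMeasure] (hf : IsPolynomialFunction f) (hf0 : f ≠ 0) :
    μ {x | f x = 0} = 0 := by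
  let ψ := (Module.finBasis ℝ E).equivFunL.symm
  have : (volume.map ψ).IsAddHaarMeasure := ψ.isAddHaarMeasure_map _
  refine Measure.absolutelyContinuous_isAddHaarMeasure μ (volume.map ψ) ?_
  refine (ψ.toHomeomorph.measurableEmbedding.map_apply _ _).trans ?_
  refine complexPolynomialFunctions.volume_setOf_eq_zero (hf _ ψ.toLinearMap)
    fun h => hf0 (funext fun x => ?_)
  simpa using congrFun h (ψ.symm x)

end IsPolynomialFunction

theorem MeasureTheory.Measure.toSphere_preimage_eq_zero {E : Type*} [NormedAddCommGroup E]
    [NormedSpace ℝ E] [MeasurableSpace E] [BorelSpace E] (μ : Measure E) {Z : Set E}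
    (hZ : MeasurableSet Z) (hμZ : μ Z = 0) (hsmul : ∀ r : ℝ, 0 < r → ∀ x ∈ Z, r • x ∈ Z) :
    μ.toSphere (Subtype.val ⁻¹' Z) = 0 := by
  rw [μ.toSphere_apply' (measurable_subtype_coe hZ)]
  refine mul_eq_zero_of_right _ (measure_mono_null ?_ hμZ)
  rintro _ ⟨r, hr, _, ⟨x, hx, rfl⟩, rfl⟩
  exact hsmul r hr.1 x hx

namespace Subalgebra

variable {X R : Type*}

theorem matrix_mul_apply_mem [CommSemiring R] (A : Subalgebra R (X → R)) {l m n : Type*}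
    [Fintype m] {M : X → Matrix l m R} {N : X → Matrix m n R} (hM : ∀ i j, (fun x => M x i j) ∈ A)
    (hN : ∀ i j, (fun x => N x i j) ∈ A) (i : l) (k : n) :
    (fun x => (M x * N x) i k) ∈ A := by
  have : (fun x => (M x * N x) i k) = ∑ j, (fun x => M x i j) * fun x => N x j k := by
    ext; simp [Matrix.mul_apply]
  rw [this]
  exact A.sum_mem fun j _ => A.mul_mem (hM i j) (hN j k)

theorem matrix_det_mem [CommRing R] (A : Subalgebra R (X → R)) {n : Type*} [Fintype n]
    [DecidableEq n] {M : X → Matrix n n R} (hM : ∀ i j, (fun x => M x i j) ∈ A) :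
    (fun x => (M x).det) ∈ A := by
  have : (fun x => (M x).det) = ∑ σ : Equiv.Perm n, σ.sign • ∏ i, fun x => M x (σ i) i := by
    ext; simp [Matrix.det_apply]
  rw [this]
  exact A.sum_mem fun σ _ => by
    rw [Units.smul_def]; exact zsmul_mem (A.prod_mem fun i _ => hM _ _) _

end Subalgebra

theorem linearIndependent_matrix_iff_det_ne_zero {K m n : Type*} [Field K] [Fintype m]
    [Fintype n] [DecidableEq m] [DecidableEq n] (A : m × n → Matrix m n K) :
    LinearIndependent K A ↔ (Matrix.of fun p q => A p q.1 q.2).det ≠ 0 := by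
  let e : Matrix m n K ≃ₗ[K] (m × n → K) := (LinearEquiv.curry K K m n).symm
  rw [← LinearMap.linearIndependent_iff (e : Matrix m n K →ₗ[K] m × n → K) e.ker,
    ← isUnit_iff_ne_zero, ← Matrix.isUnit_iff_isUnit_det,
    ← Matrix.linearIndependent_rows_iff_isUnit]
  rfl

def keyProductDet (d : ℕ) (t : ℂ) (V : Matrix (Fin (d - 1)) (Fin (d - 1)) ℂ) : ℂ :=
  (Matrix.of fun p q : Fin d × Fin d =>
    (keyA d t (fun _ => V) p.1 * keyA d t (fun _ => V) p.2) q.1 q.2).det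

section keyA

variable {d : ℕ}

theorem linearIndependent_keyA_mul_iff (t : ℂ) (V : Matrix (Fin (d - 1)) (Fin (d - 1)) ℂ) :
    LinearIndependent ℂ (fun p : Fin d × Fin d =>
      keyA d t (fun _ => V) p.1 * keyA d t (fun _ => V) p.2) ↔ keyProductDet d t V ≠ 0 :=
  linearIndependent_matrix_iff_det_ne_zero _

theorem blockTV_mul_smul (c t : ℂ) (V : Matrix (Fin (d - 1)) (Fin (d - 1)) ℂ) :
    blockTV d (c * t) (c • V) = c • blockTV d t V := by
  ext j k
  simp only [blockTV, Matrix.of_apply, Matrix.smul_apply, smul_eq_mul]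
  split_ifs <;> simp

theorem keyA_mul_smul (c t : ℂ) (V : Matrix (Fin (d - 1)) (Fin (d - 1)) ℂ) (m : Fin d) :
    keyA d (c * t) (fun _ => c • V) m = c • keyA d t (fun _ => V) m := by
  simp only [keyA, blockTV_mul_smul, Matrix.mul_smul, Matrix.smul_mul]

theorem keyProductDet_mul_smul (c t : ℂ) (V : Matrix (Fin (d - 1)) (Fin (d - 1)) ℂ) :
    keyProductDet d (c * t) (c • V) = (c * c) ^ (d * d) * keyProductDet d t V := by
  have : (Matrix.of fun p q : Fin d × Fin d =>
      (keyA d (c * t) (fun _ => c • V) p.1 * keyA d (c * t) (fun _ => c • V) p.2) q.1 q.2) =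
      (c * c) • Matrix.of fun p q : Fin d × Fin d =>
        (keyA d t (fun _ => V) p.1 * keyA d t (fun _ => V) p.2) q.1 q.2 := by
    ext p q
    simp [keyA_mul_smul, mul_assoc]
  rw [keyProductDet, this, Matrix.det_smul, Fintype.card_prod, Fintype.card_fin, keyProductDet]

variable {X : Type*} (A : Subalgebra ℂ (X → ℂ)) {t : X → ℂ}
  {V : X → Matrix (Fin (d - 1)) (Fin (d - 1)) ℂ}

theorem blockTV_apply_mem (ht : t ∈ A) (hV : ∀ j k, (fun x => V x j k) ∈ A) (j k : Fin d) :
    (fun x => blockTV d (t x) (V x) j k) ∈ A := by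
  simp only [blockTV, Matrix.of_apply]
  split_ifs
  exacts [ht, A.zero_mem, hV _ _]

theorem keyProductDet_mem (ht : t ∈ A) (hV : ∀ j k, (fun x => V x j k) ∈ A) :
    (fun x => keyProductDet d (t x) (V x)) ∈ A := by
  have hconst (M : Matrix (Fin d) (Fin d) ℂ) (j k : Fin d) : (fun _ : X => M j k) ∈ A :=
    A.algebraMap_mem _
  have hkeyA (m j k : Fin d) : (fun x => keyA d (t x) (fun _ => V x) m j k) ∈ A :=
    A.matrix_mul_apply_mem (A.matrix_mul_apply_mem (hconst _) (blockTV_apply_mem A ht hV))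
      (hconst _) j k
  exact A.matrix_det_mem fun p q => A.matrix_mul_apply_mem (hkeyA p.1) (hkeyA p.2) q.1 q.2

end keyA

theorem inner_real_smul_self {n : ℕ} (r : ℝ) (y : EuclideanSpace ℂ (Fin n)) :
    inner ℂ (r • y) (r • y) = (r : ℂ) * r * inner ℂ y y := by
  rw [← Complex.coe_smul, inner_smul_left, inner_smul_right, Complex.conj_ofReal, mul_assoc]

def homReflMat (n : ℕ) (y : EuclideanSpace ℂ (Fin n)) : Matrix (Fin n) (Fin n) ℂ :=
  Matrix.of fun j k => 2 * y j * starRingEnd ℂ (y k) - if j = k then inner ℂ y y else 0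

theorem homReflMat_of_norm_eq_one {n : ℕ} {y : EuclideanSpace ℂ (Fin n)} (hy : ‖y‖ = 1) :
    homReflMat n y = reflMat n y := by
  ext j k
  simp [homReflMat, reflMat, inner_self_eq_norm_sq_to_K, hy]

theorem homReflMat_smul {n : ℕ} (r : ℝ) (y : EuclideanSpace ℂ (Fin n)) :
    homReflMat n (r • y) = ((r : ℂ) * r) • homReflMat n y := by
  ext j k
  simp only [homReflMat, Matrix.of_apply, Matrix.smul_apply, smul_eq_mul, PiLp.smul_apply,
    Complex.real_smul, map_mul, Complex.conj_ofReal, inner_real_smul_self]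
  split_ifs <;> ring

def homKeyProductDet (d : ℕ) (t : ℝ) (y : EuclideanSpace ℂ (Fin (d - 1))) : ℂ :=
  keyProductDet d (t * inner ℂ y y) (homReflMat (d - 1) y)

section homKeyProductDet

variable {d : ℕ} (t : ℝ)

theorem homKeyProductDet_of_norm_eq_one {y : EuclideanSpace ℂ (Fin (d - 1))} (hy : ‖y‖ = 1) :
    homKeyProductDet d t y = keyProductDet d t (reflMat (d - 1) y) := by
  simp [homKeyProductDet, homReflMat_of_norm_eq_one hy, inner_self_eq_norm_sq_to_K, hy]

theorem homKeyProductDet_smul (r : ℝ) (y : EuclideanSpace ℂ (Fin (d - 1))) :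
    homKeyProductDet d t (r • y) =
      ((r : ℂ) * r * (r * r)) ^ (d * d) * homKeyProductDet d t y := by
  rw [homKeyProductDet, homReflMat_smul, inner_real_smul_self,
    show (t : ℂ) * (r * r * inner ℂ y y) = (r * r) * (t * inner ℂ y y) by ring,
    keyProductDet_mul_smul, homKeyProductDet]

theorem isPolynomialFunction_homKeyProductDet :
    IsPolynomialFunction (homKeyProductDet d t) := by
  intro n ψ
  set A := complexPolynomialFunctions n
  let proj (i : Fin (d - 1)) : EuclideanSpace ℂ (Fin (d - 1)) →ₗ[ℝ] ℂ :=
    (EuclideanSpace.proj i : EuclideanSpace ℂ (Fin (d - 1)) →L[ℂ] ℂ).toLinearMap.restrictScalars ℝ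
  have hcoord (i : Fin (d - 1)) : (fun v => ψ v i) ∈ A :=
    complexPolynomialFunctions.linearMap_mem (proj i ∘ₗ ψ)
  have hconj (i : Fin (d - 1)) : (fun v => starRingEnd ℂ (ψ v i)) ∈ A :=
    complexPolynomialFunctions.linearMap_mem (Complex.conjAe.toLinearMap ∘ₗ proj i ∘ₗ ψ)
  have hinner : (fun v => inner ℂ (ψ v) (ψ v)) ∈ A := by
    have : (fun v => inner ℂ (ψ v) (ψ v)) =
        ∑ i, (fun v => ψ v i) * fun v => starRingEnd ℂ (ψ v i) := by
      ext v
      simp only [PiLp.inner_apply, RCLike.inner_apply, Finset.sum_apply, Pi.mul_apply]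
    rw [this]
    exact A.sum_mem fun i _ => A.mul_mem (hcoord i) (hconj i)
  refine keyProductDet_mem A (A.mul_mem (A.algebraMap_mem (t : ℂ)) hinner) fun j k => ?_
  simp only [homReflMat, Matrix.of_apply]
  refine A.sub_mem (A.mul_mem (A.mul_mem (A.algebraMap_mem 2) (hcoord j)) (hconj k)) ?_
  split_ifs
  exacts [hinner, A.zero_mem]

end homKeyProductDet

theorem linearIndependent_ae_sphere_general (d : ℕ) (t : ℝ)
    (hw : ∃ w : EuclideanSpace ℂ (Fin (d - 1)), ‖w‖ = 1 ∧
      LinearIndependent ℂ (fun p : Fin d × Fin d =>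
        keyA d (t : ℂ) (fun _ => reflMat (d - 1) w) p.1 *
          keyA d (t : ℂ) (fun _ => reflMat (d - 1) w) p.2))
    (μ : Measure (EuclideanSpace ℂ (Fin (d - 1)))) (hμ : μ.IsAddHaarMeasure) :
    μ.toSphere {x : Metric.sphere (0 : EuclideanSpace ℂ (Fin (d - 1))) 1 |
      ¬ LinearIndependent ℂ (fun p : Fin d × Fin d =>
        keyA d (t : ℂ) (fun _ => reflMat (d - 1) (x : EuclideanSpace ℂ (Fin (d - 1)))) p.1 *
          keyA d (t : ℂ)
            (fun _ => reflMat (d - 1) (x : EuclideanSpace ℂ (Fin (d - 1)))) p.2)} = 0 := by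
  obtain ⟨w, hw1, hwLI⟩ := hw
  have hG := isPolynomialFunction_homKeyProductDet (d := d) t
  let Z := {y | homKeyProductDet d t y = 0}
  have hμZ : μ Z = 0 := hG.addHaar_setOf_eq_zero μ fun h => by
    rw [linearIndependent_keyA_mul_iff, ← homKeyProductDet_of_norm_eq_one t hw1, h] at hwLI
    exact hwLI rfl
  refine (congrArg μ.toSphere (?_ : _ = Subtype.val ⁻¹' Z)).trans <|
    μ.toSphere_preimage_eq_zero (measurableSet_eq_fun hG.continuous.measurable measurable_const)
      hμZ fun r _ y (hy : homKeyProductDet d t y = 0) =>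
        show homKeyProductDet d t (r • y) = 0 by rw [homKeyProductDet_smul, hy, mul_zero]
  ext x
  simp [Z, linearIndependent_keyA_mul_iff,
    homKeyProductDet_of_norm_eq_one t (norm_eq_of_mem_sphere x)]

/-- Suppose that for some unit vector `w ∈ ℂ^{d−1}`, taking `V_m = 2|w⟩⟨w| − I` for all
`m`, the family `{A_m A_n}` is linearly independent. Then for almost every unit vector
`x ∈ ℂ^{d−1}` (w.r.t. the canonical surface measure on the unit sphere of
`ℂ^{d−1} ≅ ℝ^{2(d−1)}`, obtained from an additive Haar measure `μ` via `μ.toSphere`),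
taking `V_m = 2|x⟩⟨x| − I` for all `m`, the family `{A_m A_n}` is linearly independent. -/
theorem linearIndependent_ae_sphere (d : ℕ) (hd : 3 ≤ d) (t : ℝ)
    (ht : t ∈ Set.Ioo (-1 : ℝ) 1)
    (hw : ∃ w : EuclideanSpace ℂ (Fin (d - 1)), ‖w‖ = 1 ∧
      LinearIndependent ℂ (fun p : Fin d × Fin d =>
        keyA d (t : ℂ) (fun _ => reflMat (d - 1) w) p.1 *
          keyA d (t : ℂ) (fun _ => reflMat (d - 1) w) p.2))
    (μ : Measure (EuclideanSpace ℂ (Fin (d - 1)))) (hμ : μ.IsAddHaarMeasure) :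
    μ.toSphere {x : Metric.sphere (0 : EuclideanSpace ℂ (Fin (d - 1))) 1 |
      ¬ LinearIndependent ℂ (fun p : Fin d × Fin d =>
        keyA d (t : ℂ) (fun _ => reflMat (d - 1) (x : EuclideanSpace ℂ (Fin (d - 1)))) p.1 *
          keyA d (t : ℂ)
            (fun _ => reflMat (d - 1) (x : EuclideanSpace ℂ (Fin (d - 1)))) p.2)} = 0 :=
  linearIndependent_ae_sphere_general d t hw μ hμ
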